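/- Fix an integer t ≥ 2. For every sequence of integers (i_n) indexed by n with t+2 ≤ i_n ≤ n−t−2 and i_n + t odd for each n, the even-weight-subcode miscorrection probability satisfies lim_{n→∞} n²·Q̃_n(i_n) = 1/(t−2)!, i.e., Q̃_n(i) = (1/((t−2)!·n²))·(1+o(1)) when i+t is odd. -/

import Mathlib

open Finset Filter

/-- `ℓ(i,δ,j) = i − δ + 2j + 1` (natural subtraction; the defining ranges guarantee
`i ≥ δ` wherever this is used). -/
def ell (i δ j : ℕ) : ℕ := i - δ + 2 * j + 1

/-- `V(n,i,δ,j) = C(ℓ, ℓ−j)·C(n−ℓ−1, δ−1−j)/C(n−1,i)`. -/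
noncomputable def V (n i δ j : ℕ) : ℝ :=
  (Nat.choose (ell i δ j) (ell i δ j - j) : ℝ) *
    (Nat.choose (n - ell i δ j - 1) (δ - 1 - j) : ℝ) / (Nat.choose (n - 1) i : ℝ)

/-- Binomial approximation `Â_l = (n+1)^{−t}·C(n,l)`. -/
noncomputable def Ahat (t n l : ℕ) : ℝ :=
  ((n : ℝ) + 1) ^ (-(t : ℤ)) * (Nat.choose n l : ℝ)

/-- Approximate weight distribution of the even-weight subcode:
`Ã_l = (n+1)^{−t}·C(n,l)` for even `l`, and `Ã_l = 0` for odd `l`. -/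
noncomputable def Atil (t n l : ℕ) : ℝ :=
  if l % 2 = 0 then Ahat t n l else 0

/-- `Q̃_n(i)`: probability that a bit decoded by bounded-distance decoding of the
even-weight subcode becomes erroneous given it was initially correct and `i` of
the other `n−1` positions are in error. -/
noncomputable def Qtil (t n i : ℕ) : ℝ :=
  if i ≤ t + 1 then 0
  else
    ∑ δ ∈ Icc 1 t, ∑ j ∈ range δ,
      (((ell i δ j : ℝ) + 1) / (n : ℝ)) * Atil t n (ell i δ j + 1) * V n i δ j

/-!
For each `δ` the inner sum over `j` collapses. The summand vanishes unless `δ ≡ i (mod 2)`;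
otherwise absorbing `(ℓ+1)/n` into `C(n,ℓ+1)` and a trinomial identity turn it into
`(n+1)^{-t}·C(n-1-i, j)·C(i, δ-1-j)`, which Vandermonde sums to `(n+1)^{-t}·C(n-1, δ-1)`.
When `i + t` is odd the surviving `δ` are `≡ t+1 (mod 2)`, so the largest is `t-1`, and
`n²(n+1)^{-t}C(n-1,δ-1) ~ n^{δ+1-t}/(δ-1)!` tends to `1/(t-2)!` for `δ = t-1` and to `0` below.
-/

open Asymptotics Nat Topology

theorem choose_mul_choose_mul_choose_mul_factorial (a b c d : ℕ) :
    (a + b + c + d).choose (a + b) * (a + b).choose a * (c + d).choose c * (a ! * b ! * c ! * d !)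
      = (a + b + c + d)! := by
  have hab := choose_mul_factorial_mul_factorial (Nat.le_add_right a b)
  have hcd := choose_mul_factorial_mul_factorial (Nat.le_add_right c d)
  have hN := choose_mul_factorial_mul_factorial (Nat.le_add_right (a + b) (c + d))
  rw [Nat.add_sub_cancel_left] at hab hcd hN
  rw [← add_assoc] at hN
  rw [← hN, ← hab, ← hcd]
  ring

theorem choose_mul_choose_mul_choose_comm (a b c d : ℕ) :
    (a + b + c + d).choose (a + b) * (a + b).choose a * (c + d).choose c
      = (a + b + c + d).choose (b + c) * (b + c).choose c * (a + d).choose a := by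
  have h₁ := choose_mul_choose_mul_choose_mul_factorial a b c d
  have h₂ := choose_mul_choose_mul_choose_mul_factorial c b a d
  rw [show c + b + a + d = a + b + c + d by ring, add_comm c b] at h₂
  refine Nat.eq_of_mul_eq_mul_right (by positivity : 0 < a ! * b ! * c ! * d !) ?_
  rw [h₁, ← h₂]
  ring

theorem choose_ell_mul_choose_mul_choose {n i δ j : ℕ} (hδi : δ ≤ i) (hin : i + δ ≤ n)
    (hj : j < δ) :
    (n - 1).choose (ell i δ j) * (ell i δ j).choose j * (n - ell i δ j - 1).choose (δ - 1 - j)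
      = (n - 1).choose i * i.choose (δ - 1 - j) * (n - 1 - i).choose j := by
  have h := choose_mul_choose_mul_choose_comm j (i - (δ - 1 - j)) (δ - 1 - j) (n - 1 - i - j)
  rwa [show j + (i - (δ - 1 - j)) + (δ - 1 - j) + (n - 1 - i - j) = n - 1 by omega,
    show j + (i - (δ - 1 - j)) = ell i δ j by unfold ell; omega,
    show δ - 1 - j + (n - 1 - i - j) = n - ell i δ j - 1 by unfold ell; omega,
    show i - (δ - 1 - j) + (δ - 1 - j) = i by omega,
    show j + (n - 1 - i - j) = n - 1 - i by omega] at h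

theorem summand_eq_of_even {t n i δ j : ℕ} (hδi : δ ≤ i) (hin : i + δ ≤ n) (hj : j < δ)
    (hpar : δ % 2 = i % 2) :
    ((ell i δ j : ℝ) + 1) / n * Atil t n (ell i δ j + 1) * V n i δ j
      = ((n : ℝ) + 1) ^ (-(t : ℤ)) * (((n - 1 - i).choose j * i.choose (δ - 1 - j) : ℕ) : ℝ) := by
  have heven : (ell i δ j + 1) % 2 = 0 := by unfold ell; omega
  have habsorb : (n - 1).choose (ell i δ j) * n = n.choose (ell i δ j + 1) * (ell i δ j + 1) := by
    simpa [Nat.sub_add_cancel (by omega : 1 ≤ n), mul_comm] using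
      add_one_mul_choose_eq (n - 1) (ell i δ j)
  have hsymm : (ell i δ j).choose (ell i δ j - j) = (ell i δ j).choose j :=
    choose_symm (by unfold ell; omega)
  have hprod := choose_ell_mul_choose_mul_choose hδi hin hj
  have hn : (n : ℝ) ≠ 0 := by norm_cast; omega
  have hc : ((n - 1).choose i : ℝ) ≠ 0 := by norm_cast; exact (choose_pos (by omega)).ne'
  simp only [Atil, if_pos heven, Ahat, V, hsymm]
  rw [← Nat.cast_add_one, ← Nat.cast_add_one]
  field_simp
  norm_cast
  calc _ = n * ((n - 1).choose (ell i δ j) * (ell i δ j).choose j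
          * (n - ell i δ j - 1).choose (δ - 1 - j)) := by
        rw [mul_comm (ell i δ j + 1), ← habsorb]; ring
    _ = _ := by rw [hprod]; ring

theorem summand_eq_zero_of_odd {t n i δ j : ℕ} (hδi : δ ≤ i) (hpar : δ % 2 ≠ i % 2) :
    ((ell i δ j : ℝ) + 1) / n * Atil t n (ell i δ j + 1) * V n i δ j = 0 := by
  have hodd : (ell i δ j + 1) % 2 ≠ 0 := by unfold ell; omega
  simp [Atil, hodd]

theorem sum_summand_eq {t n i δ : ℕ} (hδ : 0 < δ) (hδi : δ ≤ i) (hin : i + δ ≤ n) :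
    ∑ j ∈ range δ, ((ell i δ j : ℝ) + 1) / n * Atil t n (ell i δ j + 1) * V n i δ j
      = if δ % 2 = i % 2 then ((n : ℝ) + 1) ^ (-(t : ℤ)) * ((n - 1).choose (δ - 1) : ℝ)
        else 0 := by
  split_ifs with hpar
  · rw [sum_congr rfl fun j hj => summand_eq_of_even hδi hin (mem_range.mp hj) hpar, ← mul_sum]
    congr 1
    obtain ⟨k, rfl⟩ : ∃ k, δ = k + 1 := ⟨δ - 1, by omega⟩
    have hvandermonde := add_choose_eq (n - 1 - i) i k
    rw [Nat.sum_antidiagonal_eq_sum_range_succ (fun a b => (n - 1 - i).choose a * i.choose b),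
      show n - 1 - i + i = n - 1 by omega] at hvandermonde
    rw [Nat.add_sub_cancel, hvandermonde]
    push_cast
    rfl
  · exact sum_eq_zero fun j _ => summand_eq_zero_of_odd hδi hpar

theorem Qtil_eq_sum_choose {t n i : ℕ} (hti : t + 1 < i) (hin : i + t ≤ n) :
    Qtil t n i = ∑ δ ∈ (Icc 1 t).filter (· % 2 = i % 2),
      ((n : ℝ) + 1) ^ (-(t : ℤ)) * ((n - 1).choose (δ - 1) : ℝ) := by
  rw [Qtil, if_neg (by omega), sum_filter]
  refine sum_congr rfl fun δ hδ => ?_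
  obtain ⟨hδ₁, hδt⟩ := mem_Icc.mp hδ
  exact sum_summand_eq hδ₁ (by omega) (by omega)

theorem tendsto_sq_mul_zpow_mul_choose {t k : ℕ} (hkt : k + 2 ≤ t) :
    Tendsto (fun n : ℕ => (n : ℝ) ^ 2 * (((n : ℝ) + 1) ^ (-(t : ℤ)) * ((n - 1).choose k : ℝ)))
      atTop (𝓝 (if k + 2 = t then 1 / (k ! : ℝ) else 0)) := by
  rw [← tendsto_add_atTop_iff_nat 1]
  have hnorm : Tendsto (fun n : ℕ => ‖(n : ℝ)‖) atTop atTop := by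
    simpa using tendsto_natCast_atTop_atTop
  have hequiv : (fun n : ℕ => ((n + 1 : ℕ) : ℝ) ^ 2 * ((((n + 1 : ℕ) : ℝ) + 1) ^ (-(t : ℤ))
      * ((n + 1 - 1).choose k : ℝ))) ~[atTop]
      fun n : ℕ => (n : ℝ) ^ 2 * ((n : ℝ) ^ (-(t : ℤ)) * ((n : ℝ) ^ k / k !)) := by
    have hsucc : (fun n : ℕ => ((n : ℝ) + 1)) ~[atTop] fun n => (n : ℝ) :=
      IsEquivalent.refl.add_const_of_norm_tendsto_atTop hnorm
    have hsucc₂ : (fun n : ℕ => ((n : ℝ) + 1 + 1)) ~[atTop] fun n => (n : ℝ) :=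
      hsucc.add_const_of_norm_tendsto_atTop hnorm
    simpa only [Nat.cast_add_one, Nat.add_sub_cancel, Pi.mul_def, Pi.pow_def] using
      (hsucc.pow 2).mul ((hsucc₂.zpow _).mul (isEquivalent_choose k))
  refine hequiv.symm.tendsto_nhds ?_
  obtain ⟨s, rfl⟩ : ∃ s, t = s + (k + 2) := ⟨t - (k + 2), by omega⟩
  have hsimp : ∀ᶠ n : ℕ in atTop, ((n : ℝ) ^ s)⁻¹ * (1 / k !)
      = (n : ℝ) ^ 2 * ((n : ℝ) ^ (-((s + (k + 2) : ℕ) : ℤ)) * ((n : ℝ) ^ k / k !)) := by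
    filter_upwards [eventually_ge_atTop 1] with n hn
    have : (n : ℝ) ≠ 0 := by norm_cast; omega
    rw [zpow_neg, zpow_natCast]
    field_simp
    ring
  refine Tendsto.congr' hsimp ?_
  rcases Nat.eq_zero_or_pos s with rfl | hs
  · simp
  · rw [if_neg (by omega), ← zero_mul (1 / (k ! : ℝ))]
    exact (tendsto_inv_atTop_zero.comp
      ((tendsto_pow_atTop hs.ne').comp tendsto_natCast_atTop_atTop)).mul_const _

/-- for `t ≥ 2` and any sequence `i_n` with `t+2 ≤ i_n ≤ n−t−2` and
`i_n + t` odd, `lim_{n→∞} n²·Q̃_n(i_n) = 1/(t−2)!`. -/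
theorem stmt3 (t : ℕ) (ht : 2 ≤ t) (i : ℕ → ℕ)
    (hi : ∀ n, 4 * t + 4 < n → t + 2 ≤ i n ∧ i n ≤ n - t - 2)
    (hodd : ∀ n, 4 * t + 4 < n → Odd (i n + t)) :
    Tendsto (fun n : ℕ => (n : ℝ) ^ 2 * Qtil t n (i n)) atTop
      (nhds (1 / (Nat.factorial (t - 2) : ℝ))) := by
  set S := (Icc 1 t).filter (· % 2 = (t + 1) % 2)
  have hS : ∀ δ ∈ S, δ - 1 + 2 ≤ t := fun δ hδ => by
    simp only [S, mem_filter, mem_Icc] at hδ; omega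
  have hlimit : ∑ δ ∈ S, (if δ - 1 + 2 = t then 1 / ((δ - 1)! : ℝ) else 0) = 1 / (t - 2)! := by
    refine (sum_eq_single_of_mem (t - 1) (by simp [S]; omega) fun δ hδ hne => if_neg ?_).trans ?_
    · simp only [S, mem_filter, mem_Icc] at hδ; omega
    · rw [if_pos (by omega), show t - 1 - 1 = t - 2 by omega]
  rw [← hlimit]
  refine (tendsto_finsetSum S fun δ hδ => tendsto_sq_mul_zpow_mul_choose (hS δ hδ)).congr' ?_
  filter_upwards [eventually_gt_atTop (4 * t + 4)] with n hn
  obtain ⟨hti, hin⟩ := hi n hn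
  have hpar : i n % 2 = (t + 1) % 2 := by have := Nat.odd_iff.mp (hodd n hn); omega
  rw [Qtil_eq_sum_choose (by omega) (by omega), hpar, mul_sum]
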